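/- arXiv:2212.09961 — 2 statements merged into one kernel-verified Lean document; each statement's English description precedes it below -/
import Mathlib

section
/- Let H ∈ ℝ^{m×m} be symmetric positive semidefinite, Θ a linear subspace with orthogonal projection P, and suppose zᵀHz > 0 for every nonzero z ∈ Θ. If a symmetric matrix V satisfies (i) PVP = V, and (ii) (PHP)·V·(PHP) = (1/L)·PHP for some L > 0, then V = (1/L)·(PHP)⁺, the Moore–Penrose pseudoinverse scaled by 1/L. -/
open Matrix

/-- `W` is the Moore–Penrose pseudoinverse of `M` iff the four Penrose conditions hold. -/
def IsMoorePenroseInverse {m : ℕ} (M W : Matrix (Fin m) (Fin m) ℝ) : Prop :=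
  M * W * M = M ∧ W * M * W = W ∧ (M * W)ᵀ = M * W ∧ (W * M)ᵀ = W * M

/-- If `H` is symmetric PSD and positive definite on the subspace `Θ` with orthogonal
projection (matrix) `P`, and a symmetric `V` satisfies `PVP = V` and
`(PHP)·V·(PHP) = (1/L)·PHP` with `L > 0`, then `V = (1/L)·(PHP)⁺`, i.e. `L·V` is the
Moore–Penrose pseudoinverse of `PHP`. -/
theorem stmt14 {m : ℕ} (H P V : Matrix (Fin m) (Fin m) ℝ)
    (Θ : Submodule ℝ (Fin m → ℝ))
    (hHsymm : H.IsSymm) (hHpsd : H.PosSemidef)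
    (hPsymm : P.IsSymm) (hPidem : P * P = P)
    (hPmem : ∀ w : Fin m → ℝ, P.mulVec w ∈ Θ)
    (hPfix : ∀ w ∈ Θ, P.mulVec w = w)
    (hpos : ∀ z ∈ Θ, z ≠ 0 → 0 < z ⬝ᵥ H.mulVec z)
    (L : ℝ) (hL : 0 < L)
    (hVsymm : V.IsSymm)
    (hPVP : P * V * P = V)
    (heq : (P * H * P) * V * (P * H * P) = (1 / L) • (P * H * P)) :
    IsMoorePenroseInverse (P * H * P) (L • V) := by
  set M := P * H * P with hM
  -- key vector lemma : ker M ⊆ ker P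
  have key : ∀ x : Fin m → ℝ, M.mulVec x = 0 → P.mulVec x = 0 := by
    intro x hx
    by_contra hz
    have hlt := hpos (P.mulVec x) (hPmem x) hz
    have hdot : x ⬝ᵥ M.mulVec x = (P.mulVec x) ⬝ᵥ H.mulVec (P.mulVec x) := by
      rw [hM, ← Matrix.mulVec_mulVec, ← Matrix.mulVec_mulVec,
        Matrix.dotProduct_mulVec]
      congr 1
      nth_rewrite 1 [← hPsymm]
      exact Matrix.vecMul_transpose P x
    rw [hx, dotProduct_zero] at hdot
    rw [← hdot] at hlt
    exact lt_irrefl 0 hlt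
  -- matrix version
  have keyM : ∀ X : Matrix (Fin m) (Fin m) ℝ, M * X = 0 → P * X = 0 := by
    intro X hX
    ext i j
    have h1 : M.mulVec (fun k => X k j) = 0 := by
      funext i'
      have := congrFun (congrFun hX i') j
      simpa [Matrix.mulVec, Matrix.mul_apply, dotProduct] using this
    have h2 := congrFun (key _ h1) i
    simpa [Matrix.mulVec, Matrix.mul_apply, dotProduct] using h2
  have hPV : P * V = V := by
    have h : P * (P * V * P) = P * V * P := by
      rw [← Matrix.mul_assoc, ← Matrix.mul_assoc, hPidem]
    rw [hPVP] at h
    exact h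
  have hPM : P * M = M := by
    rw [hM, ← Matrix.mul_assoc, ← Matrix.mul_assoc, hPidem]
  have hMP : M * P = M := by
    rw [hM, Matrix.mul_assoc, hPidem]
  have hMsymm : Mᵀ = M := by
    rw [hM]
    simp [Matrix.transpose_mul, hHsymm.eq, hPsymm.eq, Matrix.mul_assoc]
  -- L • (M * V * M) = M
  have h1 : M * (L • V) * M = M := by
    rw [Matrix.mul_smul, Matrix.smul_mul, heq, smul_smul,
      mul_one_div_cancel hL.ne', one_smul]
  have hWM : (L • V) * M = P := by
    have hX : M * ((L • V) * M - P) = 0 := by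
      rw [Matrix.mul_sub, ← Matrix.mul_assoc, h1, hMP, sub_self]
    have h2 := keyM _ hX
    rw [Matrix.mul_sub, hPidem, ← Matrix.mul_assoc, Matrix.mul_smul,
      hPV, sub_eq_zero] at h2
    exact h2
  have hMW : M * (L • V) = P := by
    have h3 := congrArg Matrix.transpose hWM
    rw [Matrix.transpose_mul, Matrix.transpose_smul, hVsymm.eq, hMsymm,
      hPsymm.eq] at h3
    exact h3
  refine ⟨?_, ?_, ?_, ?_⟩
  · rw [hMW, hPM]
  · rw [hWM, Matrix.mul_smul, hPV]
  · rw [hMW, hPsymm.eq]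
  · rw [hWM, hPsymm.eq]
end

section
/- Let Ψ = span{x̃ᵢ − x̃ⱼ : i, j ∈ [n]} ⊆ ℝ^{n+d} and Θ = {β : Zᵀβ = 0} for a matrix Z ∈ ℝ^{(n+d)×(d+1)}. Assume Σ = Σ_{i>j}(x̃ᵢ − x̃ⱼ)(x̃ᵢ − x̃ⱼ)ᵀ satisfies zᵀΣz ≥ c₂n‖z‖₂² for all z ∈ Θ with c₂ > 0. Then for every β ∈ ℝ^{n+d} there exists v ∈ Ψ^⊥ such that β + v ∈ Θ. -/
/-!
On `Ψ^⊥` the quadratic form `zᵀΣz = ∑_{i>j} ⟨x̃ᵢ − x̃ⱼ, z⟩²` vanishes, so the lower bound on `Θ`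
forces `Θ ∩ Ψ^⊥ = 0` (for `n > 0`). Since `Θ = ker Zᵀ` has dimension at least
`(n + d) − (d + 1) = n − 1 ≥ dim Ψ = (n + d) − dim Ψ^⊥`, the subspaces `Θ` and `Ψ^⊥` together
span `ℝ^{n+d}`; writing `β = θ + w` with `θ ∈ Θ`, `w ∈ Ψ^⊥` gives `v = −w`.
-/

open Matrix Module LinearMap

section

variable {ι : Type*} [Fintype ι]

theorem dotProduct_sum_vecMulVec_self_mulVec {R α : Type*} [CommRing R] (s : Finset α)
    (a : α → ι → R) (z : ι → R) :
    z ⬝ᵥ (∑ p ∈ s, vecMulVec (a p) (a p)) *ᵥ z = ∑ p ∈ s, (a p ⬝ᵥ z) ^ 2 := by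
  simp only [sum_mulVec, vecMulVec_mulVec, op_smul_eq_smul, dotProduct_sum, dotProduct_smul,
    smul_eq_mul, sq]
  simp only [dotProduct_comm z]

variable {K : Type*} [Field K]

theorem dotProductBilin_nondegenerate [LinearOrder K] [IsStrictOrderedRing K] :
    BilinForm.Nondegenerate (dotProductBilin K K (m := ι)) :=
  ⟨fun v hv => dotProduct_self_eq_zero.1 (hv v), fun v hv => dotProduct_self_eq_zero.1 (hv v)⟩

theorem card_le_finrank_ker_mulVecLin_add_card {m : Type*} [Fintype m]
    (A : Matrix m ι K) : Fintype.card ι ≤ finrank K (ker A.mulVecLin) + Fintype.card m := by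
  have hrank := finrank_range_add_finrank_ker A.mulVecLin
  rw [finrank_fintype_fun_eq_card] at hrank
  have := A.rank_le_card_height
  rw [Matrix.rank] at this
  omega

theorem disjoint_ker_orthogonal_span_of_coercive_on_ker [LinearOrder K] [IsStrictOrderedRing K]
    {m α : Type*} (A : Matrix m ι K) (a : α → ι → K) (s : Finset α) {c : K} (hc : 0 < c)
    (hA : ∀ z, A *ᵥ z = 0 → c * (z ⬝ᵥ z) ≤ z ⬝ᵥ (∑ p ∈ s, vecMulVec (a p) (a p)) *ᵥ z) :
    Disjoint (ker A.mulVecLin)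
      (BilinForm.orthogonal (dotProductBilin K K) (Submodule.span K (Set.range a))) := by
  rw [Submodule.disjoint_def]
  intro z hzA hzΨ
  have horth : ∀ p, a p ⬝ᵥ z = 0 := fun p => hzΨ _ (Submodule.subset_span ⟨p, rfl⟩)
  have hle := hA z hzA
  simp only [dotProduct_sum_vecMulVec_self_mulVec, horth, ne_eq, OfNat.ofNat_ne_zero,
    not_false_eq_true, zero_pow, Finset.sum_const_zero] at hle
  have hzz : z ⬝ᵥ z = 0 :=
    le_antisymm (nonpos_of_mul_nonpos_right hle hc)
      (Finset.sum_nonneg fun i _ => mul_self_nonneg (z i))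
  exact dotProduct_self_eq_zero.1 hzz

end

theorem finrank_span_range_sub_le {K V : Type*} [DivisionRing K] [AddCommGroup V] [Module K V]
    {n : ℕ} (x : Fin n → V) :
    finrank K (Submodule.span K (Set.range fun p : Fin n × Fin n => x p.1 - x p.2)) ≤ n - 1 := by
  have hspan : Submodule.span K (Set.range fun p : Fin n × Fin n => x p.1 - x p.2) =
      vectorSpan K (Set.range x) := by
    rw [vectorSpan_def, ← Set.image2_vsub, Set.image2_range]
    rfl
  rw [hspan]
  rcases n with _ | n
  · simp
  · exact finrank_vectorSpan_range_le K x (Fintype.card_fin _)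

theorem sup_orthogonal_eq_top {K V : Type*} [Field K] [AddCommGroup V] [Module K V]
    [FiniteDimensional K V] {B : LinearMap.BilinForm K V} (hB : B.Nondegenerate)
    {U W : Submodule K V} (hdisj : Disjoint U (B.orthogonal W)) (hdim : finrank K W ≤ finrank K U) :
    U ⊔ B.orthogonal W = ⊤ := by
  refine Submodule.eq_top_of_disjoint _ _ ?_ hdisj
  have := Submodule.finrank_le W
  rw [BilinForm.finrank_orthogonal hB]
  omega

/-- Identifiability: if `Σ = Σ_{i>j}(x̃ᵢ − x̃ⱼ)(x̃ᵢ − x̃ⱼ)ᵀ` is bounded below by `c₂n > 0` on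
`Θ = {β : Zᵀβ = 0}`, then every `β` can be translated by some `v ∈ Ψ^⊥`
(`Ψ = span{x̃ᵢ − x̃ⱼ}`) into `Θ`. -/
theorem stmt16 {n d : ℕ} (x : Fin n → Fin (n + d) → ℝ)
    (Z : Matrix (Fin (n + d)) (Fin (d + 1)) ℝ)
    (c₂ : ℝ) (hc₂ : 0 < c₂)
    (hSigma : ∀ z : Fin (n + d) → ℝ, Zᵀ.mulVec z = 0 →
      c₂ * n * (z ⬝ᵥ z) ≤
        z ⬝ᵥ (∑ p ∈ Finset.univ.filter (fun p : Fin n × Fin n => p.2 < p.1),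
          Matrix.vecMulVec (x p.1 - x p.2) (x p.1 - x p.2)).mulVec z) :
    ∀ β : Fin (n + d) → ℝ, ∃ v : Fin (n + d) → ℝ,
      (∀ u ∈ Submodule.span ℝ (Set.range fun p : Fin n × Fin n => x p.1 - x p.2),
        u ⬝ᵥ v = 0) ∧
      Zᵀ.mulVec (β + v) = 0 := by
  intro β
  set Ψ := Submodule.span ℝ (Set.range fun p : Fin n × Fin n => x p.1 - x p.2)
  suffices hsup : ker Zᵀ.mulVecLin ⊔ BilinForm.orthogonal (dotProductBilin ℝ ℝ) Ψ = ⊤ by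
    obtain ⟨θ, hθ, w, hw, hβ⟩ := Submodule.mem_sup.1 (hsup ▸ Submodule.mem_top : β ∈ _)
    refine ⟨-w, fun u hu => ?_, ?_⟩
    · rw [dotProduct_neg, neg_eq_zero]
      exact hw u hu
    · rwa [← hβ, add_neg_cancel_right]
  rcases n.eq_zero_or_pos with rfl | hn
  · have hΨ : Ψ = ⊥ := by simp only [Ψ, Set.range_eq_empty, Submodule.span_empty]
    rw [hΨ, BilinForm.orthogonal_bot, sup_top_eq]
  · refine sup_orthogonal_eq_top dotProductBilin_nondegenerate
      (disjoint_ker_orthogonal_span_of_coercive_on_ker _ _ _ (by positivity) hSigma) ?_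
    have hΘ := card_le_finrank_ker_mulVecLin_add_card Zᵀ
    have hΨ : finrank ℝ Ψ ≤ n - 1 := finrank_span_range_sub_le x
    simp only [Fintype.card_fin] at hΘ
    omega
end
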